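/- arXiv:2011.02545 — 2 statements merged into one kernel-verified Lean document; each statement's English description precedes it below -/
import Mathlib

section
/- Let U, W be bounded operators on a separable Hilbert space H with W invertible and U unitary. Suppose that for each m ∈ ℕ there exist a strictly increasing sequence {n_k} ⊆ ℕ and sequences {D_k}, {G_k} of compact operators such that ‖D_k − P_m‖ → 0, ‖G_k − P_m‖ → 0, ‖W^{n_k} G_k‖ → 0, and ‖W^{−n_k} D_k‖ → 0 as k → ∞, where P_m is the orthogonal projection onto span{e_1,…,e_m}. Then the operator T_{U,W} : F ↦ W F U is topologically transitive on the space of compact operators B_0(H) with the operator norm: for any two nonempty open sets O_1, O_2 ⊆ B_0(H), there exists n ∈ ℕ with T_{U,W}^n(O_1) ∩ O_2 ≠ ∅. -/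
set_option linter.unusedSectionVars false
set_option linter.unusedVariables false

open scoped InnerProductSpace
open Filter

noncomputable section

variable {H : Type*} [NormedAddCommGroup H] [InnerProductSpace ℂ H] [CompleteSpace H]

/-- `m(F) := inf_{‖x‖=1} ‖F x‖`. -/
def mop (F : H →L[ℂ] H) : ℝ := ⨅ x : {x : H // ‖x‖ = 1}, ‖F x‖

/-- The orthogonal projection onto a finite-dimensional subspace, as an endomorphism of `H`. -/
def projCLM (K : Submodule ℂ H) (hK : FiniteDimensional ℂ K) : H →L[ℂ] H :=
  letI := hK
  letI : CompleteSpace K := FiniteDimensional.complete ℂ K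
  K.subtypeL ∘L K.orthogonalProjectionOnto

/-- `L_m`, the span of the first `m` basis vectors. -/
def Lspan (b : HilbertBasis ℕ ℂ H) (m : ℕ) : Submodule ℂ H :=
  Submodule.span ℂ (b '' Set.Iio m)

theorem Lspan_fd (b : HilbertBasis ℕ ℂ H) (m : ℕ) : FiniteDimensional ℂ (Lspan b m) :=
  FiniteDimensional.span_of_finite ℂ ((Set.finite_Iio m).image b)

/-- `P_m`, the orthogonal projection onto `L_m`. -/
def Pproj (b : HilbertBasis ℕ ℂ H) (m : ℕ) : H →L[ℂ] H := projCLM (Lspan b m) (Lspan_fd b m)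

/-- `T_{U,W}^n (F) = W^n F U^n`. -/
def Tpow (W : H ≃L[ℂ] H) (U : H →L[ℂ] H) (n : ℕ) (F : H →L[ℂ] H) : H →L[ℂ] H :=
  ((W : H →L[ℂ] H) ^ n) ∘L F ∘L (U ^ n)

/-- `S_{U,W}^n (F) = W^{-n} F U^{-n}` (here `U⁻¹ = star U` since `U` is unitary). -/
def Spow (W : H ≃L[ℂ] H) (U : H →L[ℂ] H) (n : ℕ) (F : H →L[ℂ] H) : H →L[ℂ] H :=
  ((W.symm : H →L[ℂ] H) ^ n) ∘L F ∘L ((star U) ^ n)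

/-- The cosine operator function `C^{(n)} = (1/2)(T^n + S^n)`. -/
def Cpow (W : H ≃L[ℂ] H) (U : H →L[ℂ] H) (n : ℕ) (F : H →L[ℂ] H) : H →L[ℂ] H :=
  (2 : ℂ)⁻¹ • (Tpow W U n F + Spow W U n F)

/-- `B₀(H)`, the compact operators on `H`, as a submodule of `B(H)`. -/
def B0 : Submodule ℂ (H →L[ℂ] H) := compactOperator (RingHom.id ℂ) H H

theorem Tpow_mem (W : H ≃L[ℂ] H) (U : H →L[ℂ] H) (n : ℕ) (F : H →L[ℂ] H)
    (hF : IsCompactOperator F) : Tpow W U n F ∈ B0 (H := H) :=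
  (hF.comp_clm (U ^ n)).clm_comp ((W : H →L[ℂ] H) ^ n)

theorem Spow_mem (W : H ≃L[ℂ] H) (U : H →L[ℂ] H) (n : ℕ) (F : H →L[ℂ] H)
    (hF : IsCompactOperator F) : Spow W U n F ∈ B0 (H := H) :=
  (hF.comp_clm ((star U) ^ n)).clm_comp ((W.symm : H →L[ℂ] H) ^ n)

theorem Cpow_mem (W : H ≃L[ℂ] H) (U : H →L[ℂ] H) (n : ℕ) (F : H →L[ℂ] H)
    (hF : IsCompactOperator F) : Cpow W U n F ∈ B0 (H := H) :=
  Submodule.smul_mem _ _ (Submodule.add_mem _ (Tpow_mem W U n F hF) (Spow_mem W U n F hF))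

/-- `T^n` as a map of `B₀(H)`. -/
def TB0 (W : H ≃L[ℂ] H) (U : H →L[ℂ] H) (n : ℕ) (F : B0 (H := H)) : B0 (H := H) :=
  ⟨Tpow W U n F.1, Tpow_mem W U n F.1 F.2⟩

/-- `C^{(n)}` as a map of `B₀(H)`. -/
def CB0 (W : H ≃L[ℂ] H) (U : H →L[ℂ] H) (n : ℕ) (F : B0 (H := H)) : B0 (H := H) :=
  ⟨Cpow W U n F.1, Cpow_mem W U n F.1 F.2⟩

/-- The absolute value `|G| = sqrt(G* G)` of an operator. -/
def absop (G : H →L[ℂ] H) : H →L[ℂ] H := CFC.sqrt (star G * G)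

/-- The trace computed in the orthonormal basis `b`. -/
def trB (b : HilbertBasis ℕ ℂ H) (A : H →L[ℂ] H) : ℂ := ∑' j, ⟪b j, A (b j)⟫_ℂ

/-- `G` is trace class (w.r.t. the basis `b`): the trace of `|G|` converges. -/
def IsTraceClassB (b : HilbertBasis ℕ ℂ H) (G : H →L[ℂ] H) : Prop :=
  Summable fun j => ⟪b j, absop G (b j)⟫_ℂ

/-- The trace norm `‖G‖₁ = tr |G|` computed in the basis `b`. -/
def traceNormB (b : HilbertBasis ℕ ℂ H) (G : H →L[ℂ] H) : ℝ :=
  ∑' j, (⟪b j, absop G (b j)⟫_ℂ).re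

/-- `L_n` for a basis indexed by positive integers. -/
def LspanP (b : HilbertBasis ℕ+ ℂ H) (n : ℕ) : Submodule ℂ H :=
  Submodule.span ℂ (b '' {j : ℕ+ | (j : ℕ) ≤ n})

theorem LspanP_fd (b : HilbertBasis ℕ+ ℂ H) (n : ℕ) : FiniteDimensional ℂ (LspanP b n) := by
  refine FiniteDimensional.span_of_finite ℂ (Set.Finite.image b ?_)
  have : {j : ℕ+ | (j : ℕ) ≤ n} = ((↑) : ℕ+ → ℕ) ⁻¹' Set.Iic n := rfl
  rw [this]
  exact (Set.finite_Iic n).preimage (Set.injOn_of_injective PNat.coe_injective)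

/-- `P_n` for a basis indexed by positive integers. -/
def PprojP (b : HilbertBasis ℕ+ ℂ H) (n : ℕ) : H →L[ℂ] H := projCLM (LspanP b n) (LspanP_fd b n)


/-! Take `A ∈ O₁`, `B ∈ O₂`. Since `P_m → 1` strongly and compact operators turn strong convergence
into norm convergence, `P_m A ∈ O₁` and `P_m B ∈ O₂` for some `m`. For the data `n_k, D_k, G_k`
attached to `m`, put `F_k = G_k P_m A + S^{n_k}(D_k P_m B)`. As `U` is unitary,
`‖T^n X‖ = ‖W^n X‖` and `‖S^n X‖ = ‖W^{-n} X‖`, so `F_k → P_m A`, while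
`T^{n_k} F_k = T^{n_k}(G_k P_m A) + D_k P_m B → P_m B`. -/

section CompactApprox

variable {𝕜 E F G ι : Type*} [RCLike 𝕜] [NormedAddCommGroup E] [NormedSpace 𝕜 E]
  [NormedAddCommGroup F] [NormedSpace 𝕜 F] [NormedAddCommGroup G] [NormedSpace 𝕜 G]
  {l : Filter ι}

theorem Filter.Tendsto.clm_comp_const {f : ι → F →L[𝕜] G} {X : F →L[𝕜] G}
    (hf : Tendsto f l (nhds X)) (A : E →L[𝕜] F) :
    Tendsto (fun i => f i ∘L A) l (nhds (X ∘L A)) :=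
  ((continuous_id.clm_comp continuous_const).tendsto X).comp hf

theorem IsCompactOperator.tendsto_clm_comp {P : ι → F →L[𝕜] G} {Q : F →L[𝕜] G}
    (hbdd : ∃ C, ∀ i, ‖P i‖ ≤ C) (hP : ∀ y, Tendsto (fun i => P i y) l (nhds (Q y)))
    {A : E →L[𝕜] F} (hA : IsCompactOperator A) :
    Tendsto (fun i => P i ∘L A) l (nhds (Q ∘L A)) := by
  set K := closure (A '' Metric.closedBall 0 1)
  have hK : IsCompact K := hA.isCompact_closure_image_closedBall 1
  have hequi : EquicontinuousOn (fun i => ⇑(P i)) K :=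
    Equicontinuous.equicontinuousOn (((NormedSpace.equicontinuous_TFAE P).out 5 1).1 hbdd) K
  -- Ascoli: on the compact set `K`, pointwise convergence of an equicontinuous family is uniform.
  have hunif : TendstoUniformlyOn (fun i => ⇑(P i)) Q l K := by
    have := (EquicontinuousOn.tendsto_uniformOnFun_iff_pi' (𝔖 := {K}) (by simpa using hK)
      (by simpa using hequi) l Q).2 (tendsto_pi_nhds.2 fun y => hP y)
    exact (UniformOnFun.tendsto_iff_tendstoUniformlyOn.1 this) K rfl
  rw [Metric.tendsto_nhds]
  intro ε hε
  filter_upwards [Metric.tendstoUniformlyOn_iff.1 hunif (ε / 2) (half_pos hε)] with i hi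
  rw [dist_eq_norm]
  refine lt_of_le_of_lt (ContinuousLinearMap.opNorm_le_of_unit_norm (half_pos hε).le
    fun x hx => ?_) (half_lt_self hε)
  have hAx : A x ∈ K := subset_closure ⟨x, by simp [hx], rfl⟩
  simpa [dist_eq_norm'] using (hi (A x) hAx).le

end CompactApprox

section Truncation

variable (b : HilbertBasis ℕ ℂ H)

theorem Lspan_mono : Monotone (Lspan b) := fun _ _ h =>
  Submodule.span_mono (Set.image_mono (Set.Iio_subset_Iio h))

theorem iSup_Lspan : ⨆ m, Lspan b m = Submodule.span ℂ (Set.range b) := by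
  simp only [Lspan]
  rw [← Submodule.span_iUnion, ← Set.image_iUnion, Set.iUnion_Iio, Set.image_univ]

theorem norm_Pproj_le (m : ℕ) : ‖Pproj b m‖ ≤ 1 :=
  haveI := Lspan_fd b m
  Submodule.starProjection_norm_le _

theorem Pproj_comp_Pproj (m : ℕ) : Pproj b m ∘L Pproj b m = Pproj b m :=
  haveI := Lspan_fd b m
  (Lspan b m).isIdempotentElem_starProjection

theorem tendsto_Pproj_apply (y : H) : Tendsto (fun m => Pproj b m y) atTop (nhds y) :=
  haveI := Lspan_fd b
  Submodule.starProjection_tendsto_self _ (Lspan_mono b) y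
    (by rw [iSup_Lspan, b.dense_span])

theorem tendsto_Pproj_comp {A : H →L[ℂ] H} (hA : IsCompactOperator A) :
    Tendsto (fun m => Pproj b m ∘L A) atTop (nhds A) :=
  hA.tendsto_clm_comp (Q := ContinuousLinearMap.id ℂ H) ⟨1, norm_Pproj_le b⟩
    (tendsto_Pproj_apply b)

end Truncation

section Orbit

variable {W : H ≃L[ℂ] H} {U : H →L[ℂ] H}

theorem Tpow_add (n : ℕ) (F G : H →L[ℂ] H) :
    Tpow W U n (F + G) = Tpow W U n F + Tpow W U n G := by
  simp only [Tpow, ContinuousLinearMap.add_comp, ContinuousLinearMap.comp_add]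

theorem Tpow_Spow (hU : U ∈ unitary (H →L[ℂ] H)) (n : ℕ) (X : H →L[ℂ] H) :
    Tpow W U n (Spow W U n X) = X := by
  have hW : (W : H →L[ℂ] H) ^ n * (W.symm : H →L[ℂ] H) ^ n = 1 :=
    pow_mul_pow_eq_one n W.coe_comp_coe_symm
  have hU' : star U ^ n * U ^ n = 1 := pow_mul_pow_eq_one n (Unitary.star_mul_self_of_mem hU)
  calc Tpow W U n (Spow W U n X)
      = ((W : H →L[ℂ] H) ^ n * (W.symm : H →L[ℂ] H) ^ n) * X * (star U ^ n * U ^ n) := by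
        simp only [Tpow, Spow, ← ContinuousLinearMap.mul_def, mul_assoc]
    _ = X := by rw [hW, hU', one_mul, mul_one]

theorem norm_Tpow (hU : U ∈ unitary (H →L[ℂ] H)) (n : ℕ) (F : H →L[ℂ] H) :
    ‖Tpow W U n F‖ = ‖((W : H →L[ℂ] H) ^ n) ∘L F‖ :=
  CStarRing.norm_mul_mem_unitary (((W : H →L[ℂ] H) ^ n) * F) (pow_mem hU n)

theorem norm_Spow (hU : U ∈ unitary (H →L[ℂ] H)) (n : ℕ) (F : H →L[ℂ] H) :
    ‖Spow W U n F‖ = ‖((W.symm : H →L[ℂ] H) ^ n) ∘L F‖ :=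
  CStarRing.norm_mul_mem_unitary (((W.symm : H →L[ℂ] H) ^ n) * F)
    (pow_mem (Unitary.star_mem hU) n)

theorem tendsto_approx_orbit (hU : U ∈ unitary (H →L[ℂ] H)) {ι : Type*} {l : Filter ι}
    {P A B : H →L[ℂ] H} (hPA : P ∘L A = A) (hPB : P ∘L B = B)
    {n : ι → ℕ} {D G : ι → H →L[ℂ] H}
    (hD : Tendsto (fun k => ‖D k - P‖) l (nhds 0)) (hG : Tendsto (fun k => ‖G k - P‖) l (nhds 0))
    (hWG : Tendsto (fun k => ‖((W : H →L[ℂ] H) ^ n k) ∘L G k‖) l (nhds 0))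
    (hWD : Tendsto (fun k => ‖((W.symm : H →L[ℂ] H) ^ n k) ∘L D k‖) l (nhds 0)) :
    Tendsto (fun k => G k ∘L A + Spow W U (n k) (D k ∘L B)) l (nhds A) ∧
      Tendsto (fun k => Tpow W U (n k) (G k ∘L A + Spow W U (n k) (D k ∘L B))) l (nhds B) := by
  have hGA : Tendsto (fun k => G k ∘L A) l (nhds A) := by
    simpa only [hPA] using (tendsto_iff_norm_sub_tendsto_zero.2 hG).clm_comp_const A
  have hDB : Tendsto (fun k => D k ∘L B) l (nhds B) := by
    simpa only [hPB] using (tendsto_iff_norm_sub_tendsto_zero.2 hD).clm_comp_const B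
  have hTGA : Tendsto (fun k => Tpow W U (n k) (G k ∘L A)) l (nhds 0) := by
    rw [tendsto_zero_iff_norm_tendsto_zero]
    simpa [norm_Tpow hU, ContinuousLinearMap.comp_assoc] using
      ((tendsto_zero_iff_norm_tendsto_zero.2 hWG).clm_comp_const A).norm
  have hSDB : Tendsto (fun k => Spow W U (n k) (D k ∘L B)) l (nhds 0) := by
    rw [tendsto_zero_iff_norm_tendsto_zero]
    simpa [norm_Spow hU, ContinuousLinearMap.comp_assoc] using
      ((tendsto_zero_iff_norm_tendsto_zero.2 hWD).clm_comp_const B).norm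
  refine ⟨by simpa using hGA.add hSDB, ?_⟩
  simp only [Tpow_add, Tpow_Spow hU]
  simpa using hTGA.add hDB

end Orbit

/-- sufficient condition for topological transitivity of `T_{U,W}` on `B₀(H)`. -/
theorem stmt10 (b : HilbertBasis ℕ ℂ H) (W : H ≃L[ℂ] H) (U : H →L[ℂ] H)
    (hU : U ∈ unitary (H →L[ℂ] H))
    (hyp : ∀ m : ℕ, ∃ n : ℕ → ℕ, StrictMono n ∧
      ∃ D G : ℕ → H →L[ℂ] H,
        (∀ k, IsCompactOperator (D k)) ∧ (∀ k, IsCompactOperator (G k)) ∧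
        Filter.Tendsto (fun k => ‖D k - Pproj b m‖) atTop (nhds 0) ∧
        Filter.Tendsto (fun k => ‖G k - Pproj b m‖) atTop (nhds 0) ∧
        Filter.Tendsto (fun k => ‖((W : H →L[ℂ] H) ^ n k) ∘L G k‖) atTop (nhds 0) ∧
        Filter.Tendsto (fun k => ‖((W.symm : H →L[ℂ] H) ^ n k) ∘L D k‖) atTop (nhds 0)) :
    ∀ O₁ O₂ : Set ↥(B0 (H := H)), IsOpen O₁ → IsOpen O₂ → O₁.Nonempty → O₂.Nonempty →
      ∃ n : ℕ, 0 < n ∧ ∃ F ∈ O₁, TB0 W U n F ∈ O₂ := by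
  rintro O₁ O₂ hO₁ hO₂ ⟨A, hA⟩ ⟨B, hB⟩
  obtain ⟨V₁, hV₁, rfl⟩ := isOpen_induced_iff.1 hO₁
  obtain ⟨V₂, hV₂, rfl⟩ := isOpen_induced_iff.1 hO₂
  obtain ⟨m, hmA, hmB⟩ := (((tendsto_Pproj_comp b A.2).eventually (hV₁.mem_nhds hA)).and
    ((tendsto_Pproj_comp b B.2).eventually (hV₂.mem_nhds hB))).exists
  obtain ⟨n, hn, D, G, -, -, hD, hG, hWG, hWD⟩ := hyp m
  have hPP (X : H →L[ℂ] H) : Pproj b m ∘L (Pproj b m ∘L X) = Pproj b m ∘L X := by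
    rw [← ContinuousLinearMap.comp_assoc, Pproj_comp_Pproj]
  obtain ⟨hF, hTF⟩ := tendsto_approx_orbit hU (hPP A) (hPP B) hD hG hWG hWD
  obtain ⟨k, hkA, hkB, hk⟩ := ((hF.eventually (hV₁.mem_nhds hmA)).and
    ((hTF.eventually (hV₂.mem_nhds hmB)).and (hn.tendsto_atTop.eventually_gt_atTop 0))).exists
  have hcompact : G k ∘L (Pproj b m ∘L A) + Spow W U (n k) (D k ∘L (Pproj b m ∘L B)) ∈ B0 :=
    Submodule.add_mem _ ((A.2.clm_comp (Pproj b m)).clm_comp (G k))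
      (Spow_mem W U _ _ ((B.2.clm_comp (Pproj b m)).clm_comp (D k)))
  exact ⟨n k, hk, ⟨_, hcompact⟩, hkA, hkB⟩

end
end

section
/- Let U, W ∈ B(H) with W invertible and U unitary, and suppose there exist a nonzero finite-dimensional subspace K of H and N ∈ ℕ with U^n(K) ⊥ K for all n ≥ N. If the set of periodic elements of {T_{U,W}^n} is dense in B_0(H), then m(W) < 1. -/
/-!
Suppose `m(W) ≥ 1`, so that every power of `W` is expanding. Approximate the rank-one projection
onto a unit vector `e ∈ K` within `1/2` by a compact `G` of period `N'`. For `n` a multiple of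
`N'`, periodicity gives `G (U⁻ⁿ e) = Wⁿ (G e)`, so `‖G (U⁻ⁿ e)‖ ≥ ‖G e‖ ≥ 1/2`. Along the
multiples of `(N + 1) N'` the vectors `U⁻ⁿ e` form an orthonormal sequence, which the compact
operator `G` must send to a null sequence: a contradiction.
-/

set_option linter.unusedSectionVars false
set_option linter.unusedVariables false

open scoped InnerProductSpace
open Filter

noncomputable section

variable {H : Type*} [NormedAddCommGroup H] [InnerProductSpace ℂ H] [CompleteSpace H]

open Topology

section Orthonormal

variable {𝕜 E F : Type*} [RCLike 𝕜] [NormedAddCommGroup E] [InnerProductSpace 𝕜 E]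
  [NormedAddCommGroup F] [InnerProductSpace 𝕜 F]

theorem Orthonormal.tendsto_inner_right_zero {z : ℕ → E} (hz : Orthonormal 𝕜 z) (a : E) :
    Tendsto (fun k => ⟪a, z k⟫_𝕜) atTop (𝓝 0) := by
  have hsq : Tendsto (fun k => ‖⟪z k, a⟫_𝕜‖ ^ 2) atTop (𝓝 0) :=
    (hz.inner_products_summable a).tendsto_atTop_zero
  have hnorm : Tendsto (fun k => ‖⟪z k, a⟫_𝕜‖) atTop (𝓝 0) := by
    simpa only [Real.sqrt_sq (norm_nonneg _), Real.sqrt_zero] using hsq.sqrt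
  rw [tendsto_zero_iff_norm_tendsto_zero]
  simpa only [norm_inner_symm a] using hnorm

theorem IsCompactOperator.tendsto_apply_orthonormal [CompleteSpace E] [CompleteSpace F]
    {T : E →L[𝕜] F} (hT : IsCompactOperator T) {z : ℕ → E} (hz : Orthonormal 𝕜 z) :
    Tendsto (fun k => T (z k)) atTop (𝓝 0) := by
  refine tendsto_of_subseq_tendsto fun ns hns => ?_
  obtain ⟨C, hC, hball⟩ := hT.image_closedBall_subset_compact 1
  have hmem : ∀ k, T (z (ns k)) ∈ C := fun k =>
    hball ⟨z (ns k), by simp [hz.1 (ns k)], rfl⟩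
  obtain ⟨v, -, φ, hφ, hv⟩ := hC.tendsto_subseq hmem
  refine ⟨φ, ?_⟩
  suffices hv0 : v = 0 from hv0 ▸ hv
  have hlim : Tendsto (fun j => ⟪v, T (z (ns (φ j)))⟫_𝕜) atTop (𝓝 ⟪v, v⟫_𝕜) :=
    tendsto_const_nhds.inner hv
  have hnull : Tendsto (fun j => ⟪v, T (z (ns (φ j)))⟫_𝕜) atTop (𝓝 0) := by
    have := (hz.tendsto_inner_right_zero (ContinuousLinearMap.adjoint T v)).comp
      (hns.comp hφ.tendsto_atTop)
    simpa only [Function.comp_def, ContinuousLinearMap.adjoint_inner_left] using this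
  exact inner_self_eq_zero.mp (tendsto_nhds_unique hlim hnull)

theorem isCompactOperator_rankOne (x : E) (y : F) :
    IsCompactOperator (InnerProductSpace.rankOne 𝕜 x y) := by
  simpa only [InnerProductSpace.rankOne_def', ContinuousLinearMap.coe_comp] using
    (isCompactOperator_of_locallyCompactSpace_dom (innerSL 𝕜 y)).clm_comp
      (ContinuousLinearMap.toSpanSingleton 𝕜 x)

theorem orthonormal_pow_apply [CompleteSpace E] {B : E →L[𝕜] E}
    (hB : B ∈ unitary (E →L[𝕜] E)) {e : E} (he : ‖e‖ = 1)
    (horth : ∀ n, 0 < n → ⟪e, (B ^ n) e⟫_𝕜 = 0) :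
    Orthonormal 𝕜 fun k => (B ^ k) e := by
  have hpow : ∀ k, B ^ k ∈ unitary (E →L[𝕜] E) := fun k => pow_mem hB k
  have hlt : ∀ k l, k < l → ⟪(B ^ k) e, (B ^ l) e⟫_𝕜 = 0 := by
    intro k l hkl
    obtain ⟨d, rfl⟩ := Nat.exists_eq_add_of_lt hkl
    rw [add_assoc, pow_add, mul_apply_eq_comp,
      ContinuousLinearMap.inner_map_map_of_mem_unitary (hpow k)]
    exact horth _ (Nat.succ_pos d)
  refine ⟨fun k => by rw [ContinuousLinearMap.norm_map_of_mem_unitary (hpow k), he], ?_⟩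
  intro k l hkl
  rcases hkl.lt_or_gt with h | h
  · exact hlt k l h
  · rw [← inner_conj_symm, hlt l k h, map_zero]

end Orthonormal

theorem mop_mul_norm_le (A : H →L[ℂ] H) (x : H) : mop A * ‖x‖ ≤ ‖A x‖ := by
  rcases eq_or_ne x 0 with rfl | hx
  · simp
  have hbdd : BddBelow (Set.range fun u : {u : H // ‖u‖ = 1} => ‖A u‖) :=
    ⟨0, by rintro _ ⟨u, rfl⟩; exact norm_nonneg _⟩
  have hle : mop A ≤ ‖x‖⁻¹ * ‖A x‖ := by
    calc mop A ≤ ‖A ((‖x‖⁻¹ : ℂ) • x)‖ := ciInf_le hbdd ⟨_, norm_smul_inv_norm hx⟩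
      _ = ‖x‖⁻¹ * ‖A x‖ := by simp [norm_smul]
  rw [mul_comm]
  exact (le_inv_mul_iff₀ (norm_pos_iff.mpr hx)).mp hle

theorem norm_le_norm_pow_apply_of_one_le_mop {A : H →L[ℂ] H} (hA : 1 ≤ mop A) (n : ℕ) (x : H) :
    ‖x‖ ≤ ‖(A ^ n) x‖ := by
  induction n with
  | zero => simp
  | succ n ih =>
    calc ‖x‖ ≤ ‖(A ^ n) x‖ := ih
      _ ≤ mop A * ‖(A ^ n) x‖ := le_mul_of_one_le_left (norm_nonneg _) hA
      _ ≤ ‖(A ^ (n + 1)) x‖ := by rw [pow_succ', mul_apply_eq_comp]; exact mop_mul_norm_le _ _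

theorem apply_star_pow_of_Tpow_eq {W : H ≃L[ℂ] H} {U : H →L[ℂ] H}
    (hU : U ∈ unitary (H →L[ℂ] H)) {n : ℕ} {G : H →L[ℂ] H} (hG : Tpow W U n G = G) (x : H) :
    G ((star U ^ n) x) = ((W : H →L[ℂ] H) ^ n) (G x) := by
  have hinv : U ^ n * star U ^ n = 1 := by
    rw [← star_pow]; exact Unitary.mul_star_self_of_mem (pow_mem hU n)
  calc G ((star U ^ n) x) = Tpow W U n G ((star U ^ n) x) := by rw [hG]
    _ = ((W : H →L[ℂ] H) ^ n) (G ((U ^ n * star U ^ n) x)) := rfl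
    _ = ((W : H →L[ℂ] H) ^ n) (G x) := by rw [hinv, one_apply_eq_self]

theorem stmt13_general (W : H ≃L[ℂ] H) (U : H →L[ℂ] H) (hU : U ∈ unitary (H →L[ℂ] H))
    (K : Submodule ℂ H) (hKne : K ≠ ⊥) (N : ℕ)
    (horth : ∀ n ≥ N, ∀ x ∈ K, ∀ y ∈ K, ⟪(U ^ n) x, y⟫_ℂ = 0)
    (hdense : ∀ F : H →L[ℂ] H, IsCompactOperator F → ∀ ε > (0 : ℝ),
      ∃ G : H →L[ℂ] H, IsCompactOperator G ∧
        (∃ N' : ℕ, 0 < N' ∧ ∀ k : ℕ, Tpow W U (k * N') G = G) ∧ ‖F - G‖ < ε) :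
    mop (W : H →L[ℂ] H) < 1 := by
  by_contra! hW
  obtain ⟨x, hxK, hx0⟩ := (Submodule.ne_bot_iff K).mp hKne
  set e : H := (‖x‖⁻¹ : ℂ) • x
  have he : ‖e‖ = 1 := norm_smul_inv_norm hx0
  have heK : e ∈ K := K.smul_mem _ hxK
  obtain ⟨G, hG, ⟨N', hN', hper⟩, hFG⟩ :=
    hdense _ (isCompactOperator_rankOne e e) (1 / 2) (by norm_num)
  have hGe : 1 / 2 ≤ ‖G e‖ := by
    have hFe : InnerProductSpace.rankOne ℂ e e e = e := by
      simp [inner_self_eq_norm_sq_to_K, he]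
    have hdiff := (InnerProductSpace.rankOne ℂ e e - G).le_opNorm e
    rw [sub_apply, hFe, he, mul_one] at hdiff
    linarith [norm_sub_norm_le e (G e)]
  set B := star U ^ ((N + 1) * N')
  have hBpow : ∀ k, B ^ k = star U ^ (k * (N + 1) * N') := fun k => by
    rw [← pow_mul]; ring_nf
  have hBorth : ∀ k, 0 < k → ⟪e, (B ^ k) e⟫_ℂ = 0 := by
    intro k hk
    rw [hBpow, ← star_pow, ContinuousLinearMap.star_eq_adjoint,
      ContinuousLinearMap.adjoint_inner_right]
    have hN : N ≤ k * (N + 1) * N' :=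
      calc N ≤ N + 1 := N.le_succ
        _ ≤ k * (N + 1) := Nat.le_mul_of_pos_left _ hk
        _ ≤ k * (N + 1) * N' := Nat.le_mul_of_pos_right _ hN'
    exact horth _ hN e heK e heK
  have hnull := hG.tendsto_apply_orthonormal
    (orthonormal_pow_apply (pow_mem (Unitary.star_mem hU) _) he hBorth)
  have hbound : ∀ k, 1 / 2 ≤ ‖G ((B ^ k) e)‖ := fun k => by
    rw [hBpow, apply_star_pow_of_Tpow_eq hU (hper _)]
    exact hGe.trans (norm_le_norm_pow_apply_of_one_le_mop hW _ _)
  obtain ⟨k, hk⟩ := (hnull.norm.eventually (gt_mem_nhds (a := 1 / 2) (by simp))).exists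
  exact (hbound k).not_gt hk

/-- if the periodic elements of `{T^n}` are dense in `B₀(H)`, then `m(W) < 1`. -/
theorem stmt13 (W : H ≃L[ℂ] H) (U : H →L[ℂ] H) (hU : U ∈ unitary (H →L[ℂ] H))
    (K : Submodule ℂ H) (hK : FiniteDimensional ℂ K) (hKne : K ≠ ⊥) (N : ℕ)
    (horth : ∀ n ≥ N, ∀ x ∈ K, ∀ y ∈ K, ⟪(U ^ n) x, y⟫_ℂ = 0)
    (hdense : ∀ F : H →L[ℂ] H, IsCompactOperator F → ∀ ε > (0 : ℝ),
      ∃ G : H →L[ℂ] H, IsCompactOperator G ∧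
        (∃ N' : ℕ, 0 < N' ∧ ∀ k : ℕ, Tpow W U (k * N') G = G) ∧ ‖F - G‖ < ε) :
    mop (W : H →L[ℂ] H) < 1 :=
  stmt13_general W U hU K hKne N horth hdense

end
end
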